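/- The elements E_{jk} = ½⟦c̄_j^+, c̄_k^−⟧ for j,k ∈ [−n,n]\{0}, with c̄_{−i}^± the parafermion and c̄_i^± the paraboson generators, satisfy the gl(n|n) relations E_{ij}E_{kl} − (−1)^{deg(E_{ij})deg(E_{kl})} E_{kl}E_{ij} = δ_{jk}E_{il} − (−1)^{deg(E_{ij})deg(E_{kl})} δ_{il}E_{kj}, where deg(E_{jk}) = 0 if j,k have the same sign and 1 otherwise. -/

import Mathlib

noncomputable section

/-- The matrix unit `e_{ij}` with rows and columns indexed by positions `−2n,…,2n`. -/
def eM (n : ℕ) (i j : ℤ) : Matrix (Fin (4 * n + 1)) (Fin (4 * n + 1)) ℂ :=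
  Matrix.of fun a b => if (a.val : ℤ) = i + 2 * n ∧ (b.val : ℤ) = j + 2 * n then 1 else 0

/-- `√2` as a complex number. -/
def sq2 : ℂ := Real.sqrt 2

/-- The creation operator `c̄ⱼ^+`: for `j < 0` (parafermion) `√2(e_{2j,0} − e_{0,2j+1})`,
for `j > 0` (paraboson) `√2(e_{0,2j} + e_{2j−1,0})`. -/
def cp (n : ℕ) (j : ℤ) : Matrix (Fin (4 * n + 1)) (Fin (4 * n + 1)) ℂ :=
  if 0 < j then sq2 • (eM n 0 (2 * j) + eM n (2 * j - 1) 0)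
  else sq2 • (eM n (2 * j) 0 - eM n 0 (2 * j + 1))

/-- The annihilation operator `c̄ⱼ^−`: for `j < 0` `√2(e_{0,2j} − e_{2j+1,0})`,
for `j > 0` `√2(e_{0,2j−1} − e_{2j,0})`. -/
def cm (n : ℕ) (j : ℤ) : Matrix (Fin (4 * n + 1)) (Fin (4 * n + 1)) ℂ :=
  if 0 < j then sq2 • (eM n 0 (2 * j - 1) - eM n (2 * j) 0)
  else sq2 • (eM n 0 (2 * j) - eM n (2 * j + 1) 0)

/-- Commutator `[x,y] = xy − yx`. -/
def cbr {α : Type*} [Ring α] (x y : α) : α := x * y - y * x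

/-- Anticommutator `{x,y} = xy + yx`. -/
def abr {α : Type*} [Ring α] (x y : α) : α := x * y + y * x

/-- `E_{jk} = ½⟦c̄_j^+, c̄_k^−⟧`, where the graded bracket is the commutator when both
degrees are `(1,1)` (both indices negative) and the anticommutator otherwise. -/
def EE (n : ℕ) (j k : ℤ) : Matrix (Fin (4 * n + 1)) (Fin (4 * n + 1)) ℂ :=
  if j < 0 ∧ k < 0 then (1 / 2 : ℂ) • cbr (cp n j) (cm n k)
  else (1 / 2 : ℂ) • abr (cp n j) (cm n k)

/-- The `gl(n|n)`-degree of `E_{jk}`: `0` if `j, k` have the same sign, `1` otherwise. -/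
def dgE (j k : ℤ) : ℕ :=
  if (0 < j ∧ 0 < k) ∨ (j < 0 ∧ k < 0) then 0 else 1

/-! Every `E_{jk}` splits as `e_{ρ j, ρ k} + s(j,k) • e_{ρ' k, ρ' j}`, where `ρ` and `ρ'` place the
nonzero indices injectively on disjoint sets of positions. The first summands form a system of
matrix units, the second ones a sign-twisted transposed system, and the two systems annihilate
each other. The super-commutator relation then splits into one relation per system; the first
is immediate and the second reduces to the cocycle identity
`(-1)^{deg(E_{ab}) deg(E_{bc})} s(a,b) s(b,c) = -s(a,c)`. -/

theorem gl_relation_of_units_add_smul {ι K R : Type*} [DecidableEq ι] [CommRing K] [Ring R]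
    [Algebra K R] (A B E : ι → ι → R) (s : ι → ι → K) (d : ι → ι → ℕ)
    (hE : ∀ a b, E a b = A a b + s a b • B a b)
    (hA : ∀ a b c e, A a b * A c e = if b = c then A a e else 0)
    (hB : ∀ a b c e, B a b * B c e = if a = e then B c b else 0)
    (hAB : ∀ a b c e, A a b * B c e = 0) (hBA : ∀ a b c e, B a b * A c e = 0)
    (hs : ∀ a b c, (-1) ^ (d a b * d b c) * (s a b * s b c) = -s a c) (i j k l : ι) :
    E i j * E k l - ((-1 : K) ^ (d i j * d k l)) • (E k l * E i j) =
      (if j = k then (1 : K) else 0) • E i l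
        - ((-1 : K) ^ (d i j * d k l)) • (if i = l then (1 : K) else 0) • E k j := by
  simp only [hE, add_mul, mul_add, smul_mul_assoc, mul_smul_comm, smul_smul, hA, hB, hAB, hBA,
    smul_zero, add_zero, zero_add]
  have hsq : ∀ m : ℕ, ((-1 : K) ^ m) ^ 2 = 1 := fun m => by
    rw [← pow_mul, pow_mul', neg_one_sq, one_pow]
  by_cases hjk : j = k <;> by_cases hil : i = l
  · subst hjk hil
    simp only [if_true]
    linear_combination (norm := module)
      ((-1) ^ (d i j * d j i) * hs j i j - s j i * s i j * hsq (d i j * d j i)) • B j j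
        - hs i j i • B i i
  · subst hjk
    simp only [if_true, if_neg hil, if_neg (Ne.symm hil)]
    linear_combination (norm := module) -(hs i j l) • B i l
  · subst hil
    simp only [if_true, if_neg hjk, if_neg (Ne.symm hjk)]
    linear_combination (norm := module)
      ((-1) ^ (d i j * d k i) * hs k i j - s k i * s i j * hsq (d i j * d k i)) • B k j
  · simp only [if_neg hil, if_neg hjk, if_neg (Ne.symm hil), if_neg (Ne.symm hjk)]
    module

theorem eM_mul_eM {n : ℕ} (i l : ℤ) {j k : ℤ} (hj : |j| ≤ 2 * n) :
    eM n i j * eM n k l = if j = k then eM n i l else 0 := by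
  rw [abs_le] at hj
  let c : Fin (4 * n + 1) := ⟨(j + 2 * n).toNat, by omega⟩
  have hc : ∀ x : Fin (4 * n + 1), (x : ℤ) = j + 2 * n ↔ x = c := fun x => by
    rw [Fin.ext_iff]; show _ ↔ (x : ℕ) = (j + 2 * n).toNat; omega
  have hck : (c : ℤ) = k + 2 * n ↔ j = k := by show ((j + 2 * n).toNat : ℤ) = _ ↔ _; omega
  ext a b
  simp only [eM, Matrix.mul_apply, Matrix.of_apply]
  rw [Finset.sum_eq_single c (fun x _ hx => by simp [hc, hx]) (by simp)]
  simp only [hck, hc]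
  split_ifs <;> simp_all

theorem eM_mul_eM_of_ne {n : ℕ} (i l : ℤ) {j k : ℤ} (hjk : j ≠ k) : eM n i j * eM n k l = 0 := by
  ext a b
  simp only [eM, Matrix.mul_apply, Matrix.of_apply, Matrix.zero_apply]
  refine Finset.sum_eq_zero fun x _ => ?_
  split_ifs with h₁ h₂
  · exact absurd (h₁.2.symm.trans h₂.1) (by omega)
  all_goals simp

def unitPos (j : ℤ) : ℤ := if 0 < j then 2 * j - 1 else 2 * j

def dualPos (j : ℤ) : ℤ := if 0 < j then 2 * j else 2 * j + 1

theorem unitPos_injective : Function.Injective unitPos := by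
  intro a b; unfold unitPos; split_ifs <;> omega

theorem dualPos_injective : Function.Injective dualPos := by
  intro a b; unfold dualPos; split_ifs <;> omega

theorem unitPos_ne_dualPos (j : ℤ) {k : ℤ} (hk : k ≠ 0) : unitPos j ≠ dualPos k := by
  unfold unitPos dualPos; split_ifs <;> omega

theorem abs_unitPos_le {n : ℕ} {j : ℤ} (hj : |j| ≤ n) : |unitPos j| ≤ 2 * n := by
  rw [abs_le] at *; unfold unitPos; split_ifs <;> omega

theorem abs_dualPos_le {n : ℕ} {j : ℤ} (hj0 : j ≠ 0) (hj : |j| ≤ n) : |dualPos j| ≤ 2 * n := by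
  rw [abs_le] at *; unfold dualPos; split_ifs <;> omega

theorem eM_unitPos_mul_eM_unitPos {n : ℕ} (a : ℤ) {b : ℤ} (c e : ℤ) (hb : |b| ≤ n) :
    eM n (unitPos a) (unitPos b) * eM n (unitPos c) (unitPos e) =
      if b = c then eM n (unitPos a) (unitPos e) else 0 := by
  simp only [eM_mul_eM _ _ (abs_unitPos_le hb), unitPos_injective.eq_iff]

theorem eM_dualPos_mul_eM_dualPos {n : ℕ} {a : ℤ} (b c e : ℤ) (ha0 : a ≠ 0) (ha : |a| ≤ n) :
    eM n (dualPos b) (dualPos a) * eM n (dualPos e) (dualPos c) =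
      if a = e then eM n (dualPos b) (dualPos c) else 0 := by
  simp only [eM_mul_eM _ _ (abs_dualPos_le ha0 ha), dualPos_injective.eq_iff]

def dualSign (j k : ℤ) : ℂ := if j < 0 ∧ 0 < k then 1 else -1

theorem dualSign_cocycle {a b c : ℤ} (ha : a ≠ 0) (hb : b ≠ 0) (hc : c ≠ 0) :
    (-1 : ℂ) ^ (dgE a b * dgE b c) * (dualSign a b * dualSign b c) = -dualSign a c := by
  rcases ha.lt_or_gt with ha | ha <;> rcases hb.lt_or_gt with hb | hb <;>
    rcases hc.lt_or_gt with hc | hc <;>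
    simp [dgE, dualSign, ha, hb, hc, ha.not_gt, hb.not_gt, hc.not_gt]

theorem sq2_mul_sq2 : sq2 * sq2 = 2 := by
  rw [sq2, ← Complex.ofReal_mul, Real.mul_self_sqrt zero_le_two, Complex.ofReal_ofNat]

theorem EE_eq_eM_add_smul_eM {n : ℕ} {j k : ℤ} (hj : j ≠ 0) (hjn : |j| ≤ n) (hk : k ≠ 0)
    (hkn : |k| ≤ n) :
    EE n j k = eM n (unitPos j) (unitPos k) + dualSign j k • eM n (dualPos k) (dualPos j) := by
  rw [abs_le] at hjn hkn
  rcases hj.lt_or_gt with hj | hj <;> rcases hk.lt_or_gt with hk | hk <;>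
  · simp only [EE, cp, cm, cbr, abr, unitPos, dualPos, dualSign, hj, hk, hj.not_gt, hk.not_gt,
      and_true, and_false, if_true, if_false, smul_mul_smul_comm, sq2_mul_sq2, add_mul, mul_add,
      sub_mul, mul_sub]
    simp (disch := rw [abs_le]; omega) only [eM_mul_eM]
    split_ifs <;> first | (exfalso; omega) | module

/-- the elements `E_{jk} = ½⟦c̄_j^+, c̄_k^−⟧` satisfy the `gl(n|n)` relations
`E_{ij}E_{kl} − (−1)^{deg(E_{ij})deg(E_{kl})} E_{kl}E_{ij}
 = δ_{jk}E_{il} − (−1)^{deg(E_{ij})deg(E_{kl})} δ_{il}E_{kj}`. -/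
theorem gl_nn_relations (n : ℕ) (i j k l : ℤ)
    (hi : i ≠ 0) (hin : |i| ≤ n) (hj : j ≠ 0) (hjn : |j| ≤ n)
    (hk : k ≠ 0) (hkn : |k| ≤ n) (hl : l ≠ 0) (hln : |l| ≤ n) :
    EE n i j * EE n k l - ((-1 : ℂ) ^ (dgE i j * dgE k l)) • (EE n k l * EE n i j) =
      (if j = k then (1 : ℂ) else 0) • EE n i l
        - ((-1 : ℂ) ^ (dgE i j * dgE k l)) • (if i = l then (1 : ℂ) else 0) • EE n k j := by
  have key := gl_relation_of_units_add_smul (ι := {a : ℤ // a ≠ 0 ∧ |a| ≤ n})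
    (fun a b => eM n (unitPos a) (unitPos b)) (fun a b => eM n (dualPos b) (dualPos a))
    (fun a b => EE n a b) (fun a b => dualSign a b) (fun a b => dgE a b)
    (fun a b => EE_eq_eM_add_smul_eM a.2.1 a.2.2 b.2.1 b.2.2)
    (fun a b c e => by simpa only [Subtype.ext_iff] using eM_unitPos_mul_eM_unitPos a c e b.2.2)
    (fun a b c e => by
      simpa only [Subtype.ext_iff] using eM_dualPos_mul_eM_dualPos b c e a.2.1 a.2.2)
    (fun a b c e => eM_mul_eM_of_ne _ _ (unitPos_ne_dualPos b e.2.1))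
    (fun a b c e => eM_mul_eM_of_ne _ _ (unitPos_ne_dualPos c a.2.1).symm)
    (fun a b c => dualSign_cocycle a.2.1 b.2.1 c.2.1)
    ⟨i, hi, hin⟩ ⟨j, hj, hjn⟩ ⟨k, hk, hkn⟩ ⟨l, hl, hln⟩
  simpa only [Subtype.mk.injEq] using key

end
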